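/- arXiv:2004.12982 — 4 statements merged into one kernel-verified Lean document; each statement's English description precedes it below -/
import Mathlib

section
/- Let g : ℝ → ℝ be increasing, n̄ > 0, and M a geometric random variable on {1, 2, ...} with parameter p₀ ∈ (0,1). Define G(x) = E[g(n̄ + x + M·n̄)]. Then E[ ∫₀^{M n̄} ( g(n̄ + t) − G(0) ) dt ] ≤ 0. -/
/-!
Write `q = 1 - p₀` and `c k = g (nbar + (k + 1) nbar) - G(0)`, so that the definition of `G(0)`
says exactly `∑ q ^ k c k = 0`. Monotonicity of `g` bounds the integral over `[0, (m + 1) nbar]`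
by the right Riemann sum `nbar ∑_{k ≤ m} c k`, and averaging these partial sums against the
geometric weights is a Cauchy product with `∑ q ^ j`:
`∑_m q ^ m ∑_{k ≤ m} c k = (∑_k q ^ k c k) / (1 - q) = 0`.
-/

open Finset

theorem Monotone.intervalIntegral_le_rightRiemannSum {f : ℝ → ℝ} (hf : Monotone f) {h : ℝ}
    (hh : 0 ≤ h) (n : ℕ) :
    ∫ t in (0 : ℝ)..n * h, f t ≤ h * ∑ k ∈ range n, f ((k + 1) * h) := by
  rw [← zero_mul h, ← intervalIntegral.mul_integral_comp_mul_right]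
  have hfh : MonotoneOn (fun x => f (x * h)) (Set.Icc 0 (0 + n)) :=
    fun x _ y _ hxy => hf (mul_le_mul_of_nonneg_right hxy hh)
  have := hfh.integral_le_sum
  simp only [zero_add, Nat.cast_add, Nat.cast_one] at this
  exact mul_le_mul_of_nonneg_left this hh

theorem sum_range_succ_pow_mul_mul_pow_sub {R : Type*} [CommSemiring R] (q : R) (c : ℕ → R)
    (n : ℕ) :
    ∑ k ∈ range (n + 1), q ^ k * c k * q ^ (n - k) = q ^ n * ∑ k ∈ range (n + 1), c k := by
  rw [mul_sum]
  refine sum_congr rfl fun k hk => ?_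
  rw [mul_right_comm, ← pow_add, Nat.add_sub_cancel' (Nat.lt_succ_iff.mp (mem_range.mp hk))]

theorem HasSum.pow_mul_sum_range_succ {q : ℝ} (hq : |q| < 1) {c : ℕ → ℝ} {s : ℝ}
    (hc : HasSum (fun k => q ^ k * c k) s) :
    HasSum (fun n => q ^ n * ∑ k ∈ range (n + 1), c k) (s * (1 - q)⁻¹) := by
  have hgeo := hasSum_geometric_of_abs_lt_one hq
  -- Summability in `ℝ` is absolute, which is what the Cauchy product needs.
  have hc_norm : Summable fun k => ‖q ^ k * c k‖ := hc.summable.abs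
  have hgeo_norm : Summable fun k => ‖q ^ k‖ := hgeo.summable.abs
  have hcauchy :=
    (summable_norm_sum_mul_range_of_summable_norm hc_norm hgeo_norm).of_norm.hasSum
  rw [← tsum_mul_tsum_eq_tsum_sum_range_of_summable_norm hc_norm hgeo_norm, hc.tsum_eq,
    hgeo.tsum_eq] at hcauchy
  simpa only [sum_range_succ_pow_mul_mul_pow_sub] using hcauchy

theorem HasSum.geometric_weight_mul_sub {p G : ℝ} (hq : |1 - p| < 1) {a : ℕ → ℝ}
    (ha : HasSum (fun m => (1 - p) ^ m * p * a m) G) :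
    HasSum (fun m => (1 - p) ^ m * (a m - G)) 0 := by
  have hp : p ≠ 0 := by
    rintro rfl
    simp at hq
  have hgeo := hasSum_geometric_of_abs_lt_one hq
  rw [sub_sub_cancel] at hgeo
  have hsub := (ha.div_const p).sub (hgeo.mul_right G)
  rw [div_eq_inv_mul, sub_self] at hsub
  refine hsub.congr_fun fun m => ?_
  field_simp

/-- For `g` increasing, `nbar > 0`, `M` geometric on `{1,2,...}` with
parameter `p₀ ∈ (0,1)`, and `G(0) = E[g(nbar + M nbar)]`, we have
`E[∫₀^{M nbar} (g(nbar + t) − G(0)) dt] ≤ 0`. -/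
theorem stmt7 (g : ℝ → ℝ) (hg : Monotone g) (nbar p₀ : ℝ) (hn : 0 < nbar)
    (hp : p₀ ∈ Set.Ioo (0 : ℝ) 1)
    (G0 : ℝ) (hG0 : G0 = ∑' m : ℕ, (1 - p₀) ^ m * p₀ * g (nbar + (m + 1) * nbar))
    (hG0sum : Summable (fun m : ℕ => (1 - p₀) ^ m * p₀ * g (nbar + (m + 1) * nbar)))
    (hsum : Summable (fun m : ℕ =>
      (1 - p₀) ^ m * p₀ * ∫ t in (0 : ℝ)..((m + 1) * nbar), (g (nbar + t) - G0))) :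
    ∑' m : ℕ, (1 - p₀) ^ m * p₀ * ∫ t in (0 : ℝ)..((m + 1) * nbar), (g (nbar + t) - G0) ≤ 0 := by
  set c : ℕ → ℝ := fun k => g (nbar + (k + 1) * nbar) - G0
  have hq : |1 - p₀| < 1 := abs_lt.mpr ⟨by linarith [hp.2], by linarith [hp.1]⟩
  have hpartial : HasSum (fun m => p₀ * nbar * ((1 - p₀) ^ m * ∑ k ∈ range (m + 1), c k)) 0 := by
    have := ((hG0 ▸ hG0sum.hasSum).geometric_weight_mul_sub hq
      |>.pow_mul_sum_range_succ hq).mul_left (p₀ * nbar)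
    rwa [zero_mul, mul_zero] at this
  refine hasSum_le (fun m => ?_) hsum.hasSum hpartial
  have hmono : Monotone fun t => g (nbar + t) - G0 := fun x y hxy =>
    sub_le_sub_right (hg (by linarith)) G0
  have hint := hmono.intervalIntegral_le_rightRiemannSum hn.le (m + 1)
  push_cast at hint
  calc (1 - p₀) ^ m * p₀ * ∫ t in (0 : ℝ)..((m + 1) * nbar), (g (nbar + t) - G0)
      ≤ (1 - p₀) ^ m * p₀ * (nbar * ∑ k ∈ range (m + 1), c k) :=
        mul_le_mul_of_nonneg_left hint (mul_nonneg (pow_nonneg (by linarith [hp.2]) m) hp.1.le)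
    _ = p₀ * nbar * ((1 - p₀) ^ m * ∑ k ∈ range (m + 1), c k) := by ring
end

section
/- Let g be increasing and suppose for each k ≥ 1, g(n̄ + Σ_{i=1}^k w_i + k n̄) = λ + c_k where c_k := (η_k − η_{k+1})/((1−p₀)^{k−1} p₀) with η_j ≥ 0, w_i ≥ 0, n̄ > 0, p₀ ∈ (0,1). Then (c_k) is increasing in k, and consequently η_j > 0 for all j ≥ 2 provided η_j → 0 is consistent with summability; in particular if complementary slackness η_j w_j = 0 holds, then w_j = 0 for all j ≥ 2. -/
/-!
The arguments `a k` at which `g` is evaluated increase strictly (each step adds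
`w (k+1) + nbar > 0`), so `c k = g (a k) - lam` is strictly increasing. If some
`η (m+1)` vanished, then `c m ≥ 0` (as `η m ≥ 0`), hence `c (m+1) > 0`, i.e. `η (m+2) < η (m+1) = 0`,
contradicting `η ≥ 0`. Complementary slackness then forces `w j = 0`.
-/

open Filter Finset

lemma strictMono_partialSum_add_mul {w : ℕ → ℝ} (hw : ∀ j, 0 ≤ w j) {nbar : ℝ} (hn : 0 < nbar) :
    StrictMono fun k : ℕ => nbar + (∑ i ∈ range (k + 1), w i) + (k + 1) * nbar := by
  refine strictMono_nat_of_lt_succ fun k => ?_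
  simp only [sum_range_succ _ (k + 1), Nat.cast_succ]
  linarith [hw (k + 1)]

lemma strictMono_of_comp_eq_add {g : ℝ → ℝ} (hg : StrictMono g) {a c : ℕ → ℝ}
    (ha : StrictMono a) {lam : ℝ} (h : ∀ k, g (a k) = lam + c k) : StrictMono c := by
  have : c = fun k => g (a k) + -lam := funext fun k => by linarith [h k]
  exact this ▸ (hg.comp ha).add_const (-lam)

lemma pos_of_strictMono_div_sub {η c D : ℕ → ℝ} (hη : ∀ j, 0 ≤ η j) (hD : ∀ k, 0 < D k)
    (hc : ∀ k, c k = (η k - η (k + 1)) / D k) (hmono : StrictMono c) :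
    ∀ j ≥ 1, 0 < η j := by
  intro j hj
  obtain ⟨m, rfl⟩ : ∃ m, j = m + 1 := ⟨j - 1, by omega⟩
  by_contra! hle
  have hzero : η (m + 1) = 0 := le_antisymm hle (hη _)
  have hcm : 0 ≤ c m := by
    rw [hc m, hzero, sub_zero]
    exact div_nonneg (hη m) (hD m).le
  have hcm' : 0 < η (m + 1) - η (m + 2) := by
    rw [← div_pos_iff_of_pos_right (hD (m + 1)), ← hc]
    exact hcm.trans_lt (hmono m.lt_succ_self)
  linarith [hη (m + 2)]

theorem stmt13_general (g : ℝ → ℝ) (hg : StrictMono g) (p₀ nbar lam : ℝ)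
    (hp : p₀ ∈ Set.Ioo (0 : ℝ) 1) (hn : 0 < nbar)
    (w η c : ℕ → ℝ) (hw : ∀ j, 0 ≤ w j) (hη : ∀ j, 0 ≤ η j)
    (hc : ∀ k : ℕ, c k = (η k - η (k + 1)) / ((1 - p₀) ^ k * p₀))
    (hstat : ∀ k : ℕ,
      g (nbar + (∑ i ∈ Finset.range (k + 1), w i) + (k + 1) * nbar) = lam + c k)
    (hcs : ∀ j : ℕ, η j * w j = 0) :
    StrictMono c ∧ (∀ j ≥ 1, 0 < η j) ∧ (∀ j ≥ 1, w j = 0) := by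
  have hmono : StrictMono c :=
    strictMono_of_comp_eq_add hg (strictMono_partialSum_add_mul hw hn) hstat
  have hD : ∀ k : ℕ, 0 < (1 - p₀) ^ k * p₀ := fun k =>
    mul_pos (pow_pos (sub_pos.mpr hp.2) k) hp.1
  have hηpos := pos_of_strictMono_div_sub hη hD hc hmono
  exact ⟨hmono, hηpos, fun j hj => (mul_eq_zero.mp (hcs j)).resolve_left (hηpos j hj).ne'⟩

/-- If `g` is increasing and for each `k` (index `k : ℕ` for the
original `k+1 ≥ 1`) `g(nbar + Σ_{i=1}^{k+1} w_i + (k+1) nbar) = λ + c_k` with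
`c_k = (η_k − η_{k+1})/((1−p₀)^k p₀)`, `η_j ≥ 0`, `η_j → 0`, `w_i ≥ 0`, `nbar > 0`,
`p₀ ∈ (0,1)`, then `(c_k)` is increasing; consequently `η_j > 0` for all `j ≥ 1`
(original `j ≥ 2`), and by complementary slackness `w_j = 0` for all such `j`. -/
theorem stmt13 (g : ℝ → ℝ) (hg : StrictMono g) (p₀ nbar lam : ℝ)
    (hp : p₀ ∈ Set.Ioo (0 : ℝ) 1) (hn : 0 < nbar)
    (w η c : ℕ → ℝ) (hw : ∀ j, 0 ≤ w j) (hη : ∀ j, 0 ≤ η j)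
    (hηlim : Tendsto η atTop (nhds 0))
    (hc : ∀ k : ℕ, c k = (η k - η (k + 1)) / ((1 - p₀) ^ k * p₀))
    (hstat : ∀ k : ℕ,
      g (nbar + (∑ i ∈ Finset.range (k + 1), w i) + (k + 1) * nbar) = lam + c k)
    (hcs : ∀ j : ℕ, η j * w j = 0) :
    StrictMono c ∧ (∀ j ≥ 1, 0 < η j) ∧ (∀ j ≥ 1, w j = 0) :=
  stmt13_general g hg p₀ nbar lam hp hn w η c hw hη hc hstat hcs
end

section
/- For the OU age-penalty g = h_ℓ with h_ℓ(Δ) = (σ²/(2θ))(1 − (1 − 2^(−2ℓ))e^(−2θΔ)) and a nonnegative random channel delay Y, the threshold waiting rule of Theorem 1 evaluates in closed form to w*(ȳ) = max{ (1/(2θ))·log( (σ²/(2θ))(1 − 2^(−2ℓ))·E[e^(−2θY)] / ((σ²/(2θ)) − λ) ) − ȳ, 0 }, for any λ ∈ (2^(−2ℓ)σ²/(2θ), σ²/(2θ)). -/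
/-! Since `h_ℓ(Δ) = c - c (1 - 2^{-2ℓ}) e^{-2θΔ}` with `c = σ²/(2θ)` is affine in `e^{-2θΔ}`,
`G_ȳ(x) = c - c (1 - 2^{-2ℓ}) e^{-2θ(ȳ + x)} E[e^{-2θY}]`, and `G_ȳ(x) = λ` is solved by taking
logarithms; the interval for `λ` makes both `c (1 - 2^{-2ℓ})` and `c - λ` positive. -/

open MeasureTheory Real

theorem integral_const_sub_mul_exp_add {Ω : Type*} [MeasurableSpace Ω] {μ : Measure Ω}
    [IsProbabilityMeasure μ] {Y : Ω → ℝ} (c b k s : ℝ)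
    (hY : Integrable (fun ω => exp (-k * Y ω)) μ) :
    ∫ ω, (c - b * exp (-k * (s + Y ω))) ∂μ =
      c - b * exp (-k * s) * ∫ ω, exp (-k * Y ω) ∂μ := by
  simp_rw [mul_add, exp_add, ← mul_assoc]
  rw [integral_sub (integrable_const c) (hY.const_mul _), integral_const, integral_const_mul,
    probReal_univ, one_smul]

theorem const_sub_mul_exp_log_eq {c b m k lam : ℝ} (hk : k ≠ 0) (hb : 0 < b) (hm : 0 < m)
    (hlam : lam < c) :
    c - b * exp (-k * (1 / k * log (b * m / (c - lam)))) * m = lam := by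
  have hcl : 0 < c - lam := sub_pos.2 hlam
  rw [show -k * (1 / k * log (b * m / (c - lam))) = -log (b * m / (c - lam)) by field_simp,
    exp_neg, exp_log (by positivity), inv_div]
  field_simp
  ring

theorem stmt14_general {Ω : Type*} [MeasurableSpace Ω] (μ : Measure Ω) [IsProbabilityMeasure μ]
    (σ θ : ℝ) (hθ : 0 < θ) (ℓ : ℕ)
    (Y : Ω → ℝ)
    (hYint : Integrable (fun ω => Real.exp (-2 * θ * Y ω)) μ)
    (ybar lam : ℝ)
    (hlam : lam ∈ Set.Ioo ((2 : ℝ) ^ (-(2 * (ℓ : ℤ))) * (σ ^ 2 / (2 * θ)))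
      (σ ^ 2 / (2 * θ)))
    (h G : ℝ → ℝ)
    (hh : ∀ Δ : ℝ, h Δ = σ ^ 2 / (2 * θ) *
      (1 - (1 - (2 : ℝ) ^ (-(2 * (ℓ : ℤ)))) * Real.exp (-2 * θ * Δ)))
    (hG : ∀ x : ℝ, G x = ∫ ω, h (ybar + x + Y ω) ∂μ)
    (xstar : ℝ)
    (hx : xstar = 1 / (2 * θ) *
      Real.log (σ ^ 2 / (2 * θ) * (1 - (2 : ℝ) ^ (-(2 * (ℓ : ℤ)))) *
        (∫ ω, Real.exp (-2 * θ * Y ω) ∂μ) / (σ ^ 2 / (2 * θ) - lam)) - ybar) :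
    G xstar = lam := by
  simp only [show -2 * θ = -(2 * θ) by ring] at hh hx hYint
  set c := σ ^ 2 / (2 * θ)
  set a := 1 - (2 : ℝ) ^ (-(2 * (ℓ : ℤ)))
  have hca : 0 < c * a := by linarith [hlam.1, hlam.2]
  have hh' : ∀ Δ, h Δ = c - c * a * exp (-(2 * θ) * Δ) := fun Δ => by rw [hh]; ring
  have hxs : ybar + xstar =
      1 / (2 * θ) * log (c * a * (∫ ω, exp (-(2 * θ) * Y ω) ∂μ) / (c - lam)) := by
    rw [hx]; ring
  simp only [hG, hh']
  rw [integral_const_sub_mul_exp_add c (c * a) (2 * θ) _ hYint, hxs]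
  exact const_sub_mul_exp_log_eq (by positivity) hca (integral_exp_pos hYint) hlam.2

/-- For the OU age-penalty `h_ℓ` and channel delay `Y ≥ 0`, the
threshold of Theorem 1 evaluates in closed form: the point
`x* = (1/(2θ)) log( (σ²/(2θ))(1 − 2^{−2ℓ}) E[e^{−2θY}] / ((σ²/(2θ)) − λ) ) − ȳ`
satisfies `G_ȳ(x*) = λ`, where `G_ȳ(x) = E[h_ℓ(ȳ + x + Y)]`, for any
`λ ∈ (2^{−2ℓ} σ²/(2θ), σ²/(2θ))`; hence `w*(ȳ) = max(x*, 0)`. -/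
theorem stmt14 {Ω : Type*} [MeasurableSpace Ω] (μ : Measure Ω) [IsProbabilityMeasure μ]
    (σ θ : ℝ) (hσ : 0 < σ) (hθ : 0 < θ) (ℓ : ℕ) (hℓ : 1 ≤ ℓ)
    (Y : Ω → ℝ) (hY0 : ∀ ω, 0 ≤ Y ω)
    (hYint : Integrable (fun ω => Real.exp (-2 * θ * Y ω)) μ)
    (ybar lam : ℝ) (hybar : 0 ≤ ybar)
    (hlam : lam ∈ Set.Ioo ((2 : ℝ) ^ (-(2 * (ℓ : ℤ))) * (σ ^ 2 / (2 * θ)))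
      (σ ^ 2 / (2 * θ)))
    (h G : ℝ → ℝ)
    (hh : ∀ Δ : ℝ, h Δ = σ ^ 2 / (2 * θ) *
      (1 - (1 - (2 : ℝ) ^ (-(2 * (ℓ : ℤ)))) * Real.exp (-2 * θ * Δ)))
    (hG : ∀ x : ℝ, G x = ∫ ω, h (ybar + x + Y ω) ∂μ)
    (xstar : ℝ)
    (hx : xstar = 1 / (2 * θ) *
      Real.log (σ ^ 2 / (2 * θ) * (1 - (2 : ℝ) ^ (-(2 * (ℓ : ℤ)))) *
        (∫ ω, Real.exp (-2 * θ * Y ω) ∂μ) / (σ ^ 2 / (2 * θ) - lam)) - ybar) :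
    G xstar = lam :=
  stmt14_general μ σ θ hθ ℓ Y hYint ybar lam hlam h G hh hG xstar hx
end

section
/- Let M be geometric on {1,2,...} with parameter p₀ ∈ (0,1), K > 0, θ > 0. Then the FR long-term average MMSE, computed via the time-average over an epoch, is E[∫₀^{M K} h_ℓ(n̄ + t) dt] / E[M K] = (σ²/(2θ))·(1 − ((1 − 2^(−2ℓ))·e^(−2θ n̄)·p₀ / (2θ K)) · (1 − e^(−2θ K)) / (1 − (1 − p₀)·e^(−2θ K))). -/
/-- With `M` geometric(`p₀`) on `{1,2,...}` (index `m : ℕ` for `M = m+1`)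
and `h_ℓ` the OU age-penalty, the FR long-term average MMSE under the zero-wait policy,
`E[∫₀^{MK} h_ℓ(nbar + t) dt] / E[MK]`, equals
`(σ²/(2θ))(1 − ((1−2^{−2ℓ}) e^{−2θnbar} p₀/(2θK)) (1−e^{−2θK})/(1−(1−p₀)e^{−2θK}))`. -/
theorem stmt16 (σ θ p₀ nbar K : ℝ) (hσ : 0 < σ) (hθ : 0 < θ)
    (hp : p₀ ∈ Set.Ioo (0 : ℝ) 1) (hn : 0 < nbar) (hK : 0 < K) (ℓ : ℕ)
    (h : ℝ → ℝ)
    (hh : ∀ Δ : ℝ, h Δ = σ ^ 2 / (2 * θ) *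
      (1 - (1 - (2 : ℝ) ^ (-(2 * (ℓ : ℤ)))) * Real.exp (-2 * θ * Δ))) :
    (∑' m : ℕ, (1 - p₀) ^ m * p₀ * ∫ t in (0 : ℝ)..((m + 1) * K), h (nbar + t)) /
        (∑' m : ℕ, (1 - p₀) ^ m * p₀ * ((m + 1) * K)) =
      σ ^ 2 / (2 * θ) *
        (1 - ((1 - (2 : ℝ) ^ (-(2 * (ℓ : ℤ)))) * Real.exp (-2 * θ * nbar) * p₀ /
            (2 * θ * K)) *
          (1 - Real.exp (-2 * θ * K)) / (1 - (1 - p₀) * Real.exp (-2 * θ * K))) := by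
  obtain ⟨hp0, hp1⟩ := hp
  set c : ℝ := σ ^ 2 / (2 * θ) with hc
  set a : ℝ := 1 - (2 : ℝ) ^ (-(2 * (ℓ : ℤ))) with ha
  set N : ℝ := Real.exp (-2 * θ * nbar) with hN
  set E : ℝ := Real.exp (-2 * θ * K) with hE
  set q : ℝ := 1 - p₀ with hq
  have hθ2 : (2 : ℝ) * θ ≠ 0 := by positivity
  have hq0 : 0 < q := by simp [hq]; linarith
  have hq1 : q < 1 := by simp [hq]; linarith
  have hE0 : 0 < E := Real.exp_pos _
  have hE1 : E < 1 := by
    rw [hE]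
    apply Real.exp_lt_one_iff.2
    nlinarith
  have hqE : q * E < 1 := by nlinarith
  have hqE0 : 0 < 1 - q * E := by linarith
  -- closed form for the integral
  have hint : ∀ T : ℝ, (∫ t in (0 : ℝ)..T, h (nbar + t)) =
      c * T - c * a * N * (1 - Real.exp (-2 * θ * T)) / (2 * θ) := by
    intro T
    have hfun : ∀ t : ℝ, h (nbar + t) = c - c * a * N * Real.exp ((-2 * θ) * t) := by
      intro t
      rw [hh]
      have : Real.exp (-2 * θ * (nbar + t)) = N * Real.exp ((-2 * θ) * t) := by
        rw [hN, ← Real.exp_add]; ring_nf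
      rw [this]; ring
    simp only [hfun]
    have hexpint : (∫ t in (0 : ℝ)..T, Real.exp ((-2 * θ) * t)) =
        (Real.exp ((-2 * θ) * T) - 1) / (-2 * θ) := by
      have hne : (-2 : ℝ) * θ ≠ 0 := by intro hh0; apply hθ2; linarith
      rw [intervalIntegral.integral_comp_mul_left Real.exp hne]
      simp [Real.exp_zero, smul_eq_mul]
      field_simp
    have hcont : Continuous fun t : ℝ => c * a * N * Real.exp (-2 * θ * t) := by
      continuity
    rw [intervalIntegral.integral_sub intervalIntegrable_const
      (hcont.intervalIntegrable 0 T)]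
    have : (∫ t in (0 : ℝ)..T, c * a * N * Real.exp (-2 * θ * t))
        = c * a * N * ∫ t in (0 : ℝ)..T, Real.exp (-2 * θ * t) :=
      intervalIntegral.integral_const_mul _ _
    rw [this, hexpint]
    simp only [intervalIntegral.integral_const, smul_eq_mul, sub_zero]
    have h2 : (-2 : ℝ) * θ ≠ 0 := by intro hh0; apply hθ2; linarith
    field_simp
    ring
  -- exponent: exp(-2θ(m+1)K) = E^(m+1)
  have hEpow : ∀ m : ℕ, Real.exp (-2 * θ * ((m + 1) * K)) = E ^ (m + 1) := by
    intro m
    rw [hE, ← Real.exp_nat_mul]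
    congr 1
    push_cast
    ring
  -- rewrite numerator summand
  have hterm : ∀ m : ℕ, q ^ m * p₀ * (∫ t in (0 : ℝ)..((m + 1) * K), h (nbar + t)) =
      c * K * p₀ * (((m : ℝ) + 1) * q ^ m)
        - (c * a * N / (2 * θ)) * p₀ * q ^ m
        + (c * a * N / (2 * θ)) * p₀ * E * (q * E) ^ m := by
    intro m
    rw [hint, hEpow]
    rw [mul_pow, pow_succ]
    ring
  -- summability facts
  have hqa : |q| < 1 := by rw [abs_of_pos hq0]; exact hq1
  have hqEa : |q * E| < 1 := by rw [abs_of_pos (mul_pos hq0 hE0)]; exact hqE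
  have hS1 : Summable (fun m : ℕ => ((m : ℝ) + 1) * q ^ m) := by
    have h1 : Summable (fun m : ℕ => (m : ℝ) * q ^ m) := by
      simpa using summable_pow_mul_geometric_of_norm_lt_one 1 (by simpa using hqa)
    have h2 : Summable (fun m : ℕ => q ^ m) := summable_geometric_of_lt_one hq0.le hq1
    simpa [add_mul] using h1.add h2
  have hS2 : Summable (fun m : ℕ => q ^ m) := summable_geometric_of_lt_one hq0.le hq1
  have hS3 : Summable (fun m : ℕ => (q * E) ^ m) :=
    summable_geometric_of_lt_one (mul_pos hq0 hE0).le hqE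
  -- tsum values
  have hT1 : (∑' m : ℕ, ((m : ℝ) + 1) * q ^ m) = 1 / p₀ ^ 2 := by
    have h1 : (∑' m : ℕ, (m : ℝ) * q ^ m) = q / (1 - q) ^ 2 :=
      tsum_coe_mul_geometric_of_norm_lt_one (by simpa using hqa)
    have h2 : (∑' m : ℕ, q ^ m) = (1 - q)⁻¹ := tsum_geometric_of_lt_one hq0.le hq1
    have h1' : Summable (fun m : ℕ => (m : ℝ) * q ^ m) := by
      simpa using summable_pow_mul_geometric_of_norm_lt_one 1 (by simpa using hqa)
    have : (∑' m : ℕ, ((m : ℝ) + 1) * q ^ m)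
        = (∑' m : ℕ, (m : ℝ) * q ^ m) + ∑' m : ℕ, q ^ m := by
      rw [← Summable.tsum_add h1' hS2]
      congr 1; ext m; ring
    rw [this, h1, h2]
    have : (1 : ℝ) - q = p₀ := by rw [hq]; ring
    rw [this]
    field_simp [ne_of_gt hp0]
    rw [hq]; ring
  have hT2 : (∑' m : ℕ, q ^ m) = 1 / p₀ := by
    rw [tsum_geometric_of_lt_one hq0.le hq1]
    rw [show (1 : ℝ) - q = p₀ by rw [hq]; ring, one_div]
  have hT3 : (∑' m : ℕ, (q * E) ^ m) = 1 / (1 - q * E) := by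
    rw [tsum_geometric_of_lt_one (mul_pos hq0 hE0).le hqE, one_div]
  -- numerator
  have hnum : (∑' m : ℕ, (1 - p₀) ^ m * p₀ * ∫ t in (0 : ℝ)..((m + 1) * K), h (nbar + t))
      = c * K * p₀ * (1 / p₀ ^ 2) - (c * a * N / (2 * θ)) * p₀ * (1 / p₀)
        + (c * a * N / (2 * θ)) * p₀ * E * (1 / (1 - q * E)) := by
    rw [show (fun m : ℕ => (1 - p₀) ^ m * p₀ * ∫ t in (0 : ℝ)..((m + 1) * K), h (nbar + t))
        = fun m : ℕ => c * K * p₀ * (((m : ℝ) + 1) * q ^ m)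
          - (c * a * N / (2 * θ)) * p₀ * q ^ m
          + (c * a * N / (2 * θ)) * p₀ * E * (q * E) ^ m from funext fun m => by
      push_cast; exact hterm m]
    rw [Summable.tsum_add ((hS1.mul_left _).sub (hS2.mul_left _)) (hS3.mul_left _),
      Summable.tsum_sub (hS1.mul_left _) (hS2.mul_left _), tsum_mul_left, tsum_mul_left, tsum_mul_left,
      hT1, hT2, hT3]
  -- denominator
  have hden : (∑' m : ℕ, (1 - p₀) ^ m * p₀ * ((m + 1) * K)) = K / p₀ := by
    rw [show (fun m : ℕ => (1 - p₀) ^ m * p₀ * ((m + 1) * K))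
        = fun m : ℕ => p₀ * K * (((m : ℝ) + 1) * q ^ m) from funext fun m => by
      push_cast; ring]
    rw [tsum_mul_left, hT1]
    field_simp
  rw [hnum, hden]
  have hNg : 1 - q * E ≠ 0 := ne_of_gt hqE0
  have h1qE : 1 - (1 - p₀) * E = 1 - q * E := by rw [hq]
  rw [h1qE]
  rw [hc]
  field_simp
  have hNg' : 1 - E * q ≠ 0 := by rw [mul_comm]; exact hNg
  field_simp
  rw [hq]
  ring
end
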